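/- Fix an injection f from the set P of formula variables into a set A' of term variables disjoint from A, and let tr be the translation from PDL_REwLA+ expressions over (A,P) to REwLA+ terms over A ⊔ A' defined by: tr(p) = f(p)ᵈ (where eᵈ := (eᵃ)ᵃ); tr(φ→ψ) = tr(φ)ᵃ + tr(ψ); tr(F) = 0; tr([e]φ) = (tr(e);tr(φ)ᵃ)ᵃ; tr(a) = a; tr(e;f) = tr(e);tr(f); tr(e+f) = tr(e)+tr(f); tr(e⁺) = tr(e)⁺; tr(eᵃ) = tr(e)ᵃ; tr(e^{∩id}) = tr(e)^{∩id}; tr(e^{∩i̅d}) = tr(e)^{∩i̅d}; tr(φ?) = tr(φ). Then, for every PDL_REwLA+ formula φ over (A,P): the equation tr(φ) = 1 is valid on GRELfinlin if and only if the formula φ is valid on GRELfinlin. -/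

import Mathlib

/-! Statement 18: the translation `tr` from PDL_REwLA+ formulas into REwLA+ terms
preserves and reflects validity on GRELfinlin (as the equation `tr(φ) = 1`). -/

/-- A generalized structure over term variables `A` and formula variables `P`,
with universe `W`. -/
structure GStruct (A P W : Type) where
  U : W → W → Prop
  rel : A → W → W → Prop
  rel_sub : ∀ a x y, rel a x y → U x y
  val : P → W → Prop

/-- The universal relation is a finite linear order (on a nonempty finite universe). -/
def FinLin {A P W : Type} (S : GStruct A P W) : Prop :=
  Nonempty W ∧ Finite W ∧ (∀ x, S.U x x) ∧
    (∀ x y z, S.U x y → S.U y z → S.U x z) ∧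
    (∀ x y, S.U x y → S.U y x → x = y) ∧ (∀ x y, S.U x y ∨ S.U y x)

/-- The universal relation is a finite strict linear order
(on a nonempty finite universe). -/
def SFinLin {A P W : Type} (S : GStruct A P W) : Prop :=
  Nonempty W ∧ Finite W ∧ (∀ x, ¬ S.U x x) ∧
    (∀ x y z, S.U x y → S.U y z → S.U x z) ∧
    (∀ x y, x ≠ y → S.U x y ∨ S.U y x)
mutual
  /-- Formulas of PDL for REwLA+. -/
  inductive Fml (A P : Type) : Type where
    | pv : P → Fml A P
    | imp : Fml A P → Fml A P → Fml A P
    | fls : Fml A P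
    | box : Trm A P → Fml A P → Fml A P
  /-- Terms of PDL for REwLA+. -/
  inductive Trm (A P : Type) : Type where
    | tv : A → Trm A P
    | comp : Trm A P → Trm A P → Trm A P
    | union : Trm A P → Trm A P → Trm A P
    | plus : Trm A P → Trm A P
    | adom : Trm A P → Trm A P
    | capId : Trm A P → Trm A P
    | capNid : Trm A P → Trm A P
    | test : Fml A P → Trm A P
end

namespace Fml
/-- ¬φ := φ → F -/
def neg {A P : Type} (φ : Fml A P) : Fml A P := .imp φ .fls
/-- T := ¬F -/
def tru {A P : Type} : Fml A P := neg .fls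
/-- φ ∨ ψ := ¬φ → ψ -/
def or {A P : Type} (φ ψ : Fml A P) : Fml A P := .imp (neg φ) ψ
/-- φ ∧ ψ := ¬(¬φ ∨ ¬ψ) -/
def and {A P : Type} (φ ψ : Fml A P) : Fml A P := neg (or (neg φ) (neg ψ))
/-- φ ↔ ψ := (φ → ψ) ∧ (ψ → φ) -/
def iff {A P : Type} (φ ψ : Fml A P) : Fml A P := and (.imp φ ψ) (.imp ψ φ)
/-- ⟨e⟩φ := ¬[e]¬φ -/
def dia {A P : Type} (e : Trm A P) (φ : Fml A P) : Fml A P := neg (.box e (neg φ))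
end Fml

mutual
  /-- Semantics of PDL_REwLA+ formulas on a generalized structure. -/
  def semF {A P W : Type} (S : GStruct A P W) : Fml A P → W → Prop
    | .pv p, x => S.val p x
    | .imp φ ψ, x => semF S φ x → semF S ψ x
    | .fls, _ => False
    | .box e φ, x => ∀ y, semT S e x y → semF S φ y
  /-- Semantics of PDL_REwLA+ terms on a generalized structure. -/
  def semT {A P W : Type} (S : GStruct A P W) : Trm A P → W → W → Prop
    | .tv a, x, y => S.rel a x y
    | .comp e f, x, z => ∃ y, semT S e x y ∧ semT S f y z
    | .union e f, x, y => semT S e x y ∨ semT S f x y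
    | .plus e, x, y => Relation.TransGen (fun u v => semT S e u v) x y
    | .adom e, x, y => x = y ∧ ∀ z, ¬ semT S e x z
    | .capId e, x, y => semT S e x y ∧ x = y
    | .capNid e, x, y => semT S e x y ∧ x ≠ y
    | .test φ, x, y => x = y ∧ semF S φ x
end

/-- REwLA+ terms over term variables `B`. -/
inductive RE (B : Type) : Type where
  | var : B → RE B
  | one : RE B
  | zero : RE B
  | comp : RE B → RE B → RE B
  | union : RE B → RE B → RE B
  | plus : RE B → RE B
  | adom : RE B → RE B
  | capId : RE B → RE B
  | capNid : RE B → RE B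

/-- Relational semantics of REwLA+ terms given an interpretation `ρ`
of term variables. -/
def reSem {B W : Type} (ρ : B → W → W → Prop) : RE B → W → W → Prop
  | .var b => ρ b
  | .one => fun x y => x = y
  | .zero => fun _ _ => False
  | .comp e f => fun x z => ∃ y, reSem ρ e x y ∧ reSem ρ f y z
  | .union e f => fun x y => reSem ρ e x y ∨ reSem ρ f x y
  | .plus e => fun x y => Relation.TransGen (fun u v => reSem ρ e u v) x y
  | .adom e => fun x y => x = y ∧ ∀ z, ¬ reSem ρ e x z
  | .capId e => fun x y => reSem ρ e x y ∧ x = y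
  | .capNid e => fun x y => reSem ρ e x y ∧ x ≠ y

mutual
  /-- The translation of PDL_REwLA+ formulas into REwLA+ terms over `A ⊕ A'`,
  given an injection `f` of formula variables into the fresh term variables `A'`. -/
  def trF {A P A' : Type} (f : P → A') : Fml A P → RE (A ⊕ A')
    | .pv p => .adom (.adom (.var (Sum.inr (f p))))
    | .imp φ ψ => .union (.adom (trF f φ)) (trF f ψ)
    | .fls => .zero
    | .box e φ => .adom (.comp (trT f e) (.adom (trF f φ)))
  /-- The translation of PDL_REwLA+ terms into REwLA+ terms over `A ⊕ A'`. -/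
  def trT {A P A' : Type} (f : P → A') : Trm A P → RE (A ⊕ A')
    | .tv a => .var (Sum.inl a)
    | .comp e g => .comp (trT f e) (trT f g)
    | .union e g => .union (trT f e) (trT f g)
    | .plus e => .plus (trT f e)
    | .adom e => .adom (trT f e)
    | .capId e => .capId (trT f e)
    | .capNid e => .capNid (trT f e)
    | .test φ => trF f φ
end

/-!
A structure over `A ⊕ A'` induces one over `A` with the same universe and universal relation,
reading each formula variable `p` as the domain of the relation `f p`. Under this reading `tr`
commutes with the semantics: `tr e` denotes `e`, and `tr φ` denotes the test `φ?`, so `tr φ = 1`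
holds in a structure iff `φ` is valid in the induced one. Conversely, since `f` is injective and
the universal relation is reflexive, every structure over `A` is induced, by interpreting `f p`
as the identity on `pˢ`.
-/

namespace GStruct

variable {A P A' W : Type}

def reduct (f : P → A') (S : GStruct (A ⊕ A') P W) : GStruct A P W where
  U := S.U
  rel a := S.rel (.inl a)
  rel_sub a := S.rel_sub (.inl a)
  val p x := ∃ z, S.rel (.inr (f p)) x z

def expand (f : P → A') (S : GStruct A P W) (hrefl : ∀ x, S.U x x) :
    GStruct (A ⊕ A') P W where
  U := S.U
  rel
    | .inl a => S.rel a
    | .inr a' => fun u v => u = v ∧ ∃ p, f p = a' ∧ S.val p u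
  rel_sub
    | .inl a => S.rel_sub a
    | .inr _ => fun x _ h => h.1 ▸ hrefl x
  val := S.val

theorem reduct_expand {f : P → A'} (hf : Function.Injective f) (S : GStruct A P W)
    (hrefl : ∀ x, S.U x x) : (S.expand f hrefl).reduct f = S := by
  obtain ⟨U, rel, rel_sub, val⟩ := S
  simp only [reduct, expand, mk.injEq, true_and]
  funext p u
  exact propext ⟨fun ⟨_, _, _, hp, hu⟩ => hf hp ▸ hu, fun hu => ⟨u, rfl, p, rfl, hu⟩⟩

end GStruct

theorem finLin_congr {A P A' P' W : Type} {S : GStruct A P W} {T : GStruct A' P' W}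
    (h : S.U = T.U) : FinLin S ↔ FinLin T := by
  unfold FinLin
  rw [h]

theorem reSem_adom_adom {B W : Type} {ρ : B → W → W → Prop} (e : RE B) (x y : W) :
    reSem ρ (.adom (.adom e)) x y ↔ x = y ∧ ∃ z, reSem ρ e x z := by
  simp only [reSem]
  constructor
  · rintro ⟨rfl, h⟩
    by_contra! hn
    exact h x ⟨rfl, hn rfl⟩
  · rintro ⟨rfl, z, hz⟩
    exact ⟨rfl, fun _ ⟨_, h⟩ => h z hz⟩

mutual

theorem reSem_trF {A P A' W : Type} (f : P → A') (S : GStruct (A ⊕ A') P W) (φ : Fml A P)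
    (x y : W) : reSem S.rel (trF f φ) x y ↔ x = y ∧ semF (S.reduct f) φ x := by
  cases φ with
  | pv p => exact reSem_adom_adom _ x y
  | imp φ ψ =>
    simp only [trF, reSem, reSem_trF f S φ, reSem_trF f S ψ, semF]
    grind
  | fls => simp [trF, reSem, semF]
  | box e φ =>
    simp only [trF, reSem, reSem_trT f S e, reSem_trF f S φ, semF]
    grind

theorem reSem_trT {A P A' W : Type} (f : P → A') (S : GStruct (A ⊕ A') P W) (e : Trm A P)
    (x y : W) : reSem S.rel (trT f e) x y ↔ semT (S.reduct f) e x y := by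
  cases e with
  | tv a => rfl
  | comp e g => simp only [trT, reSem, semT, reSem_trT f S e, reSem_trT f S g]
  | union e g => simp only [trT, reSem, semT, reSem_trT f S e, reSem_trT f S g]
  | plus e => simp only [trT, reSem, semT, reSem_trT f S e]
  | adom e => simp only [trT, reSem, semT, reSem_trT f S e]
  | capId e => simp only [trT, reSem, semT, reSem_trT f S e]
  | capNid e => simp only [trT, reSem, semT, reSem_trT f S e]
  | test φ => simp only [trT, semT, reSem_trF f S φ]

end

theorem trF_eq_one_iff {A P A' W : Type} (f : P → A') (S : GStruct (A ⊕ A') P W)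
    (φ : Fml A P) :
    (∀ x y : W, reSem S.rel (trF f φ) x y ↔ reSem S.rel RE.one x y) ↔
      ∀ x, semF (S.reduct f) φ x := by
  simp only [reSem_trF, reSem]
  exact ⟨fun h x => ((h x x).2 rfl).2, fun h x y => ⟨And.left, fun hxy => ⟨hxy, h x⟩⟩⟩

theorem tr_equation_valid_iff_formula_valid
    {A P A' : Type} (f : P → A') (hf : Function.Injective f) (φ : Fml A P) :
    (∀ (W : Type) (S : GStruct (A ⊕ A') P W), FinLin S →
      ∀ x y : W, reSem S.rel (trF f φ) x y ↔ reSem S.rel RE.one x y) ↔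
    (∀ (W : Type) (S : GStruct A P W), FinLin S → ∀ x : W, semF S φ x) := by
  constructor
  · intro h W S hS
    have hrefl : ∀ x, S.U x x := hS.2.2.1
    rw [← S.reduct_expand hf hrefl]
    exact (trF_eq_one_iff f _ φ).1 (h W _ ((finLin_congr rfl).1 hS))
  · intro h W S hS
    exact (trF_eq_one_iff f S φ).2 (h W _ ((finLin_congr rfl).1 hS))
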